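/- arXiv:1510.05491 — 6 statements merged into one kernel-verified Lean document; each statement's English description precedes it below -/
import Mathlib

section
/- Let I ⊆ ℝ be a nonempty open interval and let Ψ : I → ℝ be strictly convex and differentiable on I, and steep in the sense that for every sequence (θ_n) in I converging to a finite boundary point of I, |Ψ′(θ_n)| → ∞. Define the convex conjugate φ(t) = sup_{θ ∈ I} (t·θ − Ψ(θ)) and let C = {t ∈ ℝ : φ(t) < ∞}. Then C is a convex set containing Ω := Ψ′(I), φ is strictly convex on C, and φ is differentiable on Ω with φ′(Ψ′(θ)) = θ for every θ ∈ I. -/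
open Set Filter Topology

/-!
At a slope `t = Ψ' θ` the tangent line of `Ψ` at `θ` lies below `Ψ`, so the supremum defining
`φ t` is attained at `θ` and `φ (Ψ' θ) = θ Ψ' θ - Ψ θ`. Comparing the tangent lines at `θ` and
`θ₀` bounds the first-order remainder of `φ` at `Ψ' θ₀` by `|Ψ' θ - Ψ' θ₀| |θ - θ₀|`, and by
Darboux's theorem and strict monotonicity of `Ψ'` every slope near `Ψ' θ₀` is `Ψ' θ` for a `θ`
near `θ₀`; hence `φ' (Ψ' θ₀) = θ₀`.

Steepness makes `Ψ'` unbounded towards a finite end of `I`, while towards an infinite end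
`Ψ' ≤ t < t₂` would make `t₂ θ - Ψ θ` grow linearly; so every `t` strictly between two points of
`C` is a value `Ψ' θ`. There the supremum for any other slope `s ∈ C` is not attained at `θ`
(a maximiser of `s θ - Ψ θ` has `Ψ' θ = s`), which makes the convexity inequality for `φ` strict.
-/

/-- Off `conjugateDomain I Ψ` the supremum is `+∞`, and `sSup` returns the junk value `0`. -/
noncomputable def convexConjugate (I : Set ℝ) (Ψ : ℝ → ℝ) (t : ℝ) : ℝ :=
  sSup ((fun θ => t * θ - Ψ θ) '' I)

def conjugateDomain (I : Set ℝ) (Ψ : ℝ → ℝ) : Set ℝ :=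
  {t | BddAbove ((fun θ => t * θ - Ψ θ) '' I)}

def IsSteep (I : Set ℝ) (Ψ' : ℝ → ℝ) : Prop :=
  ∀ x ∈ frontier I, ∀ u : ℕ → ℝ, (∀ n, u n ∈ I) →
    Tendsto u atTop (𝓝 x) → Tendsto (fun n => |Ψ' (u n)|) atTop atTop

lemma convex_conjugateDomain (I : Set ℝ) (Ψ : ℝ → ℝ) : Convex ℝ (conjugateDomain I Ψ) := by
  rintro t₁ ⟨B₁, hB₁⟩ t₂ ⟨B₂, hB₂⟩ a b ha hb hab
  refine ⟨a * B₁ + b * B₂, forall_mem_image.2 fun θ hθ => ?_⟩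
  have h₁ : t₁ * θ - Ψ θ ≤ B₁ := hB₁ (mem_image_of_mem _ hθ)
  have h₂ : t₂ * θ - Ψ θ ≤ B₂ := hB₂ (mem_image_of_mem _ hθ)
  calc (a • t₁ + b • t₂) * θ - Ψ θ = a * (t₁ * θ - Ψ θ) + b * (t₂ * θ - Ψ θ) := by
        simp only [smul_eq_mul]; linear_combination Ψ θ * hab
    _ ≤ a * B₁ + b * B₂ := by gcongr

section TangentLines

variable {S : Set ℝ} {f : ℝ → ℝ} {x y f' : ℝ}

lemma ConvexOn.add_deriv_mul_sub_le (hf : ConvexOn ℝ S f) (hx : x ∈ S) (hy : y ∈ S)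
    (hf' : HasDerivAt f f' x) : f x + f' * (y - x) ≤ f y := by
  rcases lt_trichotomy x y with hxy | rfl | hxy
  · have := hf.le_slope_of_hasDerivAt hx hy hxy hf'
    rw [slope_def_field, le_div_iff₀ (sub_pos.2 hxy)] at this
    linarith
  · simp
  · have := hf.slope_le_of_hasDerivAt hy hx hxy hf'
    rw [slope_def_field, div_le_iff₀ (sub_pos.2 hxy)] at this
    linarith

lemma StrictConvexOn.strictMonoOn_of_hasDerivAt {f' : ℝ → ℝ} (hf : StrictConvexOn ℝ S f)
    (hf' : ∀ x ∈ S, HasDerivAt f (f' x) x) : StrictMonoOn f' S :=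
  fun x hx y hy hxy => (hf.lt_slope_of_hasDerivAt hx hy hxy (hf' x hx)).trans
    (hf.slope_lt_of_hasDerivAt hx hy hxy (hf' y hy))

end TangentLines

section Conjugate

variable {I : Set ℝ} {Ψ Ψ' : ℝ → ℝ}

lemma isGreatest_image_of_hasDerivAt {θ₀ t : ℝ} (hf : ConvexOn ℝ I Ψ) (hθ₀ : θ₀ ∈ I)
    (ht : HasDerivAt Ψ t θ₀) :
    IsGreatest ((fun θ => t * θ - Ψ θ) '' I) (t * θ₀ - Ψ θ₀) :=
  ⟨mem_image_of_mem _ hθ₀, forall_mem_image.2 fun θ hθ => by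
    linear_combination hf.add_deriv_mul_sub_le hθ₀ hθ ht⟩

lemma mem_conjugateDomain_of_hasDerivAt {θ₀ t : ℝ} (hf : ConvexOn ℝ I Ψ) (hθ₀ : θ₀ ∈ I)
    (ht : HasDerivAt Ψ t θ₀) : t ∈ conjugateDomain I Ψ :=
  (isGreatest_image_of_hasDerivAt hf hθ₀ ht).bddAbove

lemma convexConjugate_eq_of_hasDerivAt {θ₀ t : ℝ} (hf : ConvexOn ℝ I Ψ) (hθ₀ : θ₀ ∈ I)
    (ht : HasDerivAt Ψ t θ₀) : convexConjugate I Ψ t = t * θ₀ - Ψ θ₀ :=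
  (isGreatest_image_of_hasDerivAt hf hθ₀ ht).csSup_eq

lemma le_convexConjugate {t θ : ℝ} (ht : t ∈ conjugateDomain I Ψ) (hθ : θ ∈ I) :
    t * θ - Ψ θ ≤ convexConjugate I Ψ t :=
  le_csSup ht (mem_image_of_mem _ hθ)

lemma lt_convexConjugate {t θ s : ℝ} (hI : IsOpen I) (ht : t ∈ conjugateDomain I Ψ)
    (hθ : θ ∈ I) (hs : HasDerivAt Ψ s θ) (hst : s ≠ t) :
    t * θ - Ψ θ < convexConjugate I Ψ t := by
  refine (le_convexConjugate ht hθ).lt_of_ne fun heq => hst ?_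
  have hmax : IsLocalMax (fun θ => t * θ - Ψ θ) θ :=
    Filter.mem_of_superset (hI.mem_nhds hθ) fun θ' hθ' => (le_convexConjugate ht hθ').trans heq.ge
  have := hmax.hasDerivAt_eq_zero (((hasDerivAt_id θ).const_mul t).sub hs)
  linarith

lemma bddAbove_of_forall_deriv_le {t t₂ B : ℝ}
    (hgrad : ∀ x ∈ I, ∀ y ∈ I, Ψ x + Ψ' x * (y - x) ≤ Ψ y) (htt₂ : t < t₂)
    (hB : ∀ θ ∈ I, t₂ * θ - Ψ θ ≤ B) (hΨ' : ∀ θ ∈ I, Ψ' θ ≤ t) : BddAbove I := by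
  rcases I.eq_empty_or_nonempty with rfl | ⟨θ₀, hθ₀⟩
  · exact bddAbove_empty
  refine ⟨max θ₀ (θ₀ + (B - (t₂ * θ₀ - Ψ θ₀)) / (t₂ - t)), fun θ hθ => ?_⟩
  rcases le_or_gt θ θ₀ with h | h
  · exact le_max_of_le_left h
  have hgrowth : (θ - θ₀) * (t₂ - t) ≤ B - (t₂ * θ₀ - Ψ θ₀) := by
    nlinarith [hgrad θ hθ θ₀ hθ₀, hB θ hθ, hΨ' θ hθ]
  refine le_max_of_le_right ?_
  rw [← sub_le_iff_le_add', le_div_iff₀ (sub_pos.2 htt₂)]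
  exact hgrowth

lemma not_bddAbove_image_of_steep (hI : IsOpen I) (hne : I.Nonempty) (hbdd : BddAbove I)
    (hmono : MonotoneOn Ψ' I)
    (hsteep : IsSteep I Ψ') :
    ¬ BddAbove (Ψ' '' I) := by
  rintro ⟨M, hM⟩
  have hsup : sSup I ∉ I := fun h => by
    obtain ⟨b, hb, hbI⟩ := (hI.eventually_mem h).exists_gt
    exact (le_csSup hbdd hbI).not_gt hb
  have hfr : sSup I ∈ frontier I := by
    rw [hI.frontier_eq]
    exact ⟨csSup_mem_closure hne hbdd, hsup⟩
  obtain ⟨u, hu_mono, hu, huI⟩ := exists_seq_tendsto_sSup hne hbdd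
  obtain ⟨n, hn⟩ := ((hsteep _ hfr u huI hu).eventually_gt_atTop (max M (-Ψ' (u 0)))).exists
  have hlow : Ψ' (u 0) ≤ Ψ' (u n) := hmono (huI 0) (huI n) (hu_mono (Nat.zero_le n))
  have hup : Ψ' (u n) ≤ M := hM (mem_image_of_mem _ (huI n))
  refine hn.not_ge (abs_le.2 ⟨?_, ?_⟩)
  · linarith [le_max_right M (-Ψ' (u 0))]
  · linarith [le_max_left M (-Ψ' (u 0))]

lemma exists_le_deriv (hI : IsOpen I) (hne : I.Nonempty)
    (hgrad : ∀ x ∈ I, ∀ y ∈ I, Ψ x + Ψ' x * (y - x) ≤ Ψ y) (hmono : MonotoneOn Ψ' I)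
    (hsteep : IsSteep I Ψ')
    {t t₂ B : ℝ} (hB : ∀ θ ∈ I, t₂ * θ - Ψ θ ≤ B) (htt₂ : t < t₂) :
    ∃ θ ∈ I, t ≤ Ψ' θ := by
  by_contra! h
  refine not_bddAbove_image_of_steep hI hne ?_ hmono hsteep ⟨t, ?_⟩
  · exact bddAbove_of_forall_deriv_le hgrad htt₂ hB fun θ hθ => (h θ hθ).le
  · exact forall_mem_image.2 fun θ hθ => (h θ hθ).le

lemma exists_deriv_le (hI : IsOpen I) (hne : I.Nonempty)
    (hgrad : ∀ x ∈ I, ∀ y ∈ I, Ψ x + Ψ' x * (y - x) ≤ Ψ y) (hmono : MonotoneOn Ψ' I)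
    (hsteep : IsSteep I Ψ')
    {t t₁ B : ℝ} (hB : ∀ θ ∈ I, t₁ * θ - Ψ θ ≤ B) (ht₁t : t₁ < t) :
    ∃ θ ∈ I, Ψ' θ ≤ t := by
  have hfr : frontier (-I) = -frontier I := ((Homeomorph.neg ℝ).preimage_frontier I).symm
  obtain ⟨θ, hθ, h⟩ := exists_le_deriv (I := -I) (Ψ := fun θ => Ψ (-θ))
    (Ψ' := fun θ => -Ψ' (-θ)) hI.neg hne.neg
    (fun x hx y hy => by linear_combination hgrad _ hx _ hy)
    (fun x hx y hy hxy => neg_le_neg (hmono hy hx (neg_le_neg hxy)))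
    (fun x hx u hu hux => by
      rw [hfr] at hx
      simpa using hsteep _ hx (-u) hu hux.neg)
    (t₂ := -t₁) (t := -t) (B := B) (fun θ hθ => by linear_combination hB _ hθ) (neg_lt_neg ht₁t)
  exact ⟨-θ, hθ, by linarith⟩

lemma Ioo_subset_image_deriv (hI : IsOpen I) (hne : I.Nonempty) (hconv : StrictConvexOn ℝ I Ψ)
    (hderiv : ∀ θ ∈ I, HasDerivAt Ψ (Ψ' θ) θ)
    (hsteep : IsSteep I Ψ')
    {t₁ t₂ : ℝ} (ht₁ : t₁ ∈ conjugateDomain I Ψ) (ht₂ : t₂ ∈ conjugateDomain I Ψ) :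
    Ioo t₁ t₂ ⊆ Ψ' '' I := by
  rintro t ⟨ht₁t, htt₂⟩
  obtain ⟨B₁, hB₁⟩ := ht₁
  obtain ⟨B₂, hB₂⟩ := ht₂
  have hgrad : ∀ x ∈ I, ∀ y ∈ I, Ψ x + Ψ' x * (y - x) ≤ Ψ y :=
    fun x hx y hy => hconv.convexOn.add_deriv_mul_sub_le hx hy (hderiv x hx)
  have hmono : MonotoneOn Ψ' I := (hconv.strictMonoOn_of_hasDerivAt hderiv).monotoneOn
  obtain ⟨θ₁, hθ₁, h₁⟩ := exists_deriv_le hI hne hgrad hmono hsteep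
    (fun θ hθ => hB₁ (mem_image_of_mem _ hθ)) ht₁t
  obtain ⟨θ₂, hθ₂, h₂⟩ := exists_le_deriv hI hne hgrad hmono hsteep
    (fun θ hθ => hB₂ (mem_image_of_mem _ hθ)) htt₂
  exact (hconv.1.ordConnected.image_hasDerivWithinAt fun θ hθ =>
    (hderiv θ hθ).hasDerivWithinAt).out (mem_image_of_mem _ hθ₁) (mem_image_of_mem _ hθ₂) ⟨h₁, h₂⟩

lemma strictConvexOn_convexConjugate (hI : IsOpen I) (hne : I.Nonempty)
    (hconv : StrictConvexOn ℝ I Ψ) (hderiv : ∀ θ ∈ I, HasDerivAt Ψ (Ψ' θ) θ)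
    (hsteep : IsSteep I Ψ') :
    StrictConvexOn ℝ (conjugateDomain I Ψ) (convexConjugate I Ψ) := by
  refine LinearOrder.strictConvexOn_of_lt (convex_conjugateDomain I Ψ)
    fun t₁ ht₁ t₂ ht₂ h a b ha hb hab => ?_
  simp only [smul_eq_mul]
  have ht : a * t₁ + b * t₂ ∈ Ioo t₁ t₂ := (Convex.mem_Ioo h).2 ⟨a, b, ha, hb, hab, rfl⟩
  obtain ⟨θ, hθ, hθt⟩ := Ioo_subset_image_deriv hI hne hconv hderiv hsteep ht₁ ht₂ ht
  have hd : HasDerivAt Ψ (a * t₁ + b * t₂) θ := hθt ▸ hderiv θ hθ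
  have h₁ := lt_convexConjugate hI ht₁ hθ hd ht.1.ne'
  have h₂ := lt_convexConjugate hI ht₂ hθ hd ht.2.ne
  calc convexConjugate I Ψ (a * t₁ + b * t₂) = a * (t₁ * θ - Ψ θ) + b * (t₂ * θ - Ψ θ) := by
        rw [convexConjugate_eq_of_hasDerivAt hconv.convexOn hθ hd]
        linear_combination Ψ θ * hab
    _ < a * convexConjugate I Ψ t₁ + b * convexConjugate I Ψ t₂ := by gcongr

lemma abs_convexConjugate_sub_sub_le {θ θ₀ t t₀ : ℝ} (hf : ConvexOn ℝ I Ψ) (hθ : θ ∈ I)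
    (hθ₀ : θ₀ ∈ I) (ht : HasDerivAt Ψ t θ) (ht₀ : HasDerivAt Ψ t₀ θ₀) :
    |convexConjugate I Ψ t - convexConjugate I Ψ t₀ - (t - t₀) * θ₀| ≤ |t - t₀| * |θ - θ₀| := by
  rw [convexConjugate_eq_of_hasDerivAt hf hθ ht, convexConjugate_eq_of_hasDerivAt hf hθ₀ ht₀,
    ← abs_mul]
  have h₁ := hf.add_deriv_mul_sub_le hθ hθ₀ ht
  have h₂ := hf.add_deriv_mul_sub_le hθ₀ hθ ht₀
  exact abs_le_abs (by linear_combination h₂) (by linear_combination 2 * h₁ + h₂)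

lemma hasDerivAt_convexConjugate (hI : IsOpen I) (hconv : StrictConvexOn ℝ I Ψ)
    (hderiv : ∀ θ ∈ I, HasDerivAt Ψ (Ψ' θ) θ) {θ₀ : ℝ} (hθ₀ : θ₀ ∈ I) :
    HasDerivAt (convexConjugate I Ψ) θ₀ (Ψ' θ₀) := by
  have hmono := hconv.strictMonoOn_of_hasDerivAt hderiv
  rw [hasDerivAt_iff_isLittleO, Asymptotics.isLittleO_iff]
  intro c hc
  obtain ⟨ε, hε, hball⟩ := Metric.isOpen_iff.1 hI θ₀ hθ₀
  set d := min c (ε / 2)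
  have hd : 0 < d := lt_min hc (half_pos hε)
  have hIcc : Icc (θ₀ - d) (θ₀ + d) ⊆ I := by
    rw [← Real.closedBall_eq_Icc]
    exact (Metric.closedBall_subset_ball (by linarith [min_le_right c (ε / 2)])).trans hball
  have hlt₁ : Ψ' (θ₀ - d) < Ψ' θ₀ := hmono (hIcc (left_mem_Icc.2 (by linarith))) hθ₀ (by linarith)
  have hlt₂ : Ψ' θ₀ < Ψ' (θ₀ + d) := hmono hθ₀ (hIcc (right_mem_Icc.2 (by linarith))) (by linarith)
  filter_upwards [Ioo_mem_nhds hlt₁ hlt₂] with t ht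
  obtain ⟨θ, hθ, rfl⟩ := exists_hasDerivWithinAt_eq_of_gt_of_lt (by linarith)
    (fun x hx => (hderiv x (hIcc hx)).hasDerivWithinAt) ht.1 ht.2
  have hθI : θ ∈ I := hIcc (Ioo_subset_Icc_self hθ)
  have hθd : |θ - θ₀| ≤ c := by
    rw [abs_sub_le_iff]
    constructor <;> linarith [hθ.1, hθ.2, min_le_left c (ε / 2)]
  rw [smul_eq_mul, Real.norm_eq_abs, Real.norm_eq_abs]
  calc _ ≤ |Ψ' θ - Ψ' θ₀| * |θ - θ₀| :=
        abs_convexConjugate_sub_sub_le hconv.convexOn hθI hθ₀ (hderiv θ hθI) (hderiv θ₀ hθ₀)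
    _ ≤ c * |Ψ' θ - Ψ' θ₀| := by rw [mul_comm]; gcongr

end Conjugate

theorem stmt_0_general (I : Set ℝ) (hIopen : IsOpen I) (hIne : I.Nonempty)
    (Ψ Ψ' : ℝ → ℝ)
    (hconv : StrictConvexOn ℝ I Ψ)
    (hderiv : ∀ θ ∈ I, HasDerivAt Ψ (Ψ' θ) θ)
    (hsteep : ∀ x ∈ frontier I, ∀ u : ℕ → ℝ, (∀ n, u n ∈ I) →
      Tendsto u atTop (𝓝 x) → Tendsto (fun n => |Ψ' (u n)|) atTop atTop)
    (φ : ℝ → ℝ)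
    (hφ : ∀ t, φ t = sSup ((fun θ => t * θ - Ψ θ) '' I))
    (C : Set ℝ)
    (hC : C = {t : ℝ | BddAbove ((fun θ => t * θ - Ψ θ) '' I)}) :
    Convex ℝ C ∧ Ψ' '' I ⊆ C ∧ StrictConvexOn ℝ C φ ∧
      ∀ θ ∈ I, HasDerivAt φ θ (Ψ' θ) := by
  obtain rfl : φ = convexConjugate I Ψ := funext hφ
  obtain rfl : C = conjugateDomain I Ψ := hC
  refine ⟨convex_conjugateDomain I Ψ, ?_,
    strictConvexOn_convexConjugate hIopen hIne hconv hderiv hsteep,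
    fun θ hθ => hasDerivAt_convexConjugate hIopen hconv hderiv hθ⟩
  exact image_subset_iff.2 fun θ hθ =>
    mem_conjugateDomain_of_hasDerivAt hconv.convexOn hθ (hderiv θ hθ)

/-- One-dimensional core of the paper's Theorem 5: the conjugate of a steep,
strictly convex, differentiable log-partition function `Ψ` on a nonempty open
interval `I` is strictly convex on its effective domain `C`, which contains the
mean domain `Ω = Ψ' '' I`, and the conjugate `φ` is differentiable on `Ω` with
`φ'(Ψ'(θ)) = θ`. -/
theorem stmt_0 (I : Set ℝ) (hIopen : IsOpen I) (hIne : I.Nonempty)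
    (hIconn : I.OrdConnected)
    (Ψ Ψ' : ℝ → ℝ)
    (hconv : StrictConvexOn ℝ I Ψ)
    (hderiv : ∀ θ ∈ I, HasDerivAt Ψ (Ψ' θ) θ)
    (hsteep : ∀ x ∈ frontier I, ∀ u : ℕ → ℝ, (∀ n, u n ∈ I) →
      Tendsto u atTop (𝓝 x) → Tendsto (fun n => |Ψ' (u n)|) atTop atTop)
    (φ : ℝ → ℝ)
    (hφ : ∀ t, φ t = sSup ((fun θ => t * θ - Ψ θ) '' I))
    (C : Set ℝ)
    (hC : C = {t : ℝ | BddAbove ((fun θ => t * θ - Ψ θ) '' I)}) :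
    Convex ℝ C ∧ Ψ' '' I ⊆ C ∧ StrictConvexOn ℝ C φ ∧
      ∀ θ ∈ I, HasDerivAt φ θ (Ψ' θ) :=
  stmt_0_general I hIopen hIne Ψ Ψ' hconv hderiv hsteep φ hφ C hC
end

section
/- Let C ⊆ ℝ be an interval with nonempty interior Ω = int(C), and let φ : C → ℝ be strictly convex on C and differentiable on Ω. Define the Bregman divergence d_φ(x,y) = φ(x) − φ(y) − (x−y)·φ′(y) for x ∈ C, y ∈ Ω. Let x_1, …, x_N ∈ C with sample mean x̄ = (1/N)·Σ_{i=1}^N x_i, and assume x̄ ∈ Ω. Then the function μ ↦ Σ_{i=1}^N d_φ(x_i, μ) on Ω attains a minimum at μ = x̄, and this minimizer is unique: for every μ ∈ Ω with μ ≠ x̄, Σ_i d_φ(x_i, μ) > Σ_i d_φ(x_i, x̄). -/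
/-!
The total divergence `μ ↦ Σᵢ d_φ(xᵢ, μ)` differs from its value at the sample mean `x̄` by exactly
`N · d_φ(x̄, μ)`: the terms `φ(xᵢ)` cancel and the linear terms only see `Σᵢ xᵢ = N x̄`. Strict
convexity puts `φ` strictly above its tangent line at `μ`, so `d_φ(x̄, μ) > 0` for `μ ≠ x̄`.
-/

open Finset

theorem StrictConvexOn.add_deriv_mul_sub_lt {S : Set ℝ} {f : ℝ → ℝ} {f' x y : ℝ}
    (hf : StrictConvexOn ℝ S f) (hx : x ∈ S) (hy : y ∈ S) (hxy : x ≠ y)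
    (hf' : HasDerivAt f f' y) : f y + f' * (x - y) < f x := by
  rcases hxy.lt_or_gt with hlt | hgt
  · have hslope := hf.slope_lt_of_hasDerivAt hx hy hlt hf'
    rw [slope_def_field, div_lt_iff₀ (sub_pos.mpr hlt)] at hslope
    linarith
  · have hslope := hf.lt_slope_of_hasDerivAt hy hx hgt hf'
    rw [slope_def_field, lt_div_iff₀ (sub_pos.mpr hgt)] at hslope
    linarith

def bregmanDiv (φ φ' : ℝ → ℝ) (x y : ℝ) : ℝ := φ x - φ y - (x - y) * φ' y

theorem bregmanDiv_pos {S : Set ℝ} {φ φ' : ℝ → ℝ} {x y : ℝ} (hφ : StrictConvexOn ℝ S φ)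
    (hx : x ∈ S) (hy : y ∈ S) (hxy : x ≠ y) (hφ' : HasDerivAt φ (φ' y) y) :
    0 < bregmanDiv φ φ' x y := by
  have := hφ.add_deriv_mul_sub_lt hx hy hxy hφ'
  unfold bregmanDiv
  linarith

theorem sum_bregmanDiv_eq_sum_bregmanDiv_mean_add {ι : Type*} (φ φ' : ℝ → ℝ) (s : Finset ι)
    (x : ι → ℝ) {m : ℝ} (hm : ∑ i ∈ s, x i = #s * m) (μ : ℝ) :
    ∑ i ∈ s, bregmanDiv φ φ' (x i) μ
      = ∑ i ∈ s, bregmanDiv φ φ' (x i) m + #s * bregmanDiv φ φ' m μ := by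
  have hsum : ∀ ν, ∑ i ∈ s, bregmanDiv φ φ' (x i) ν
      = ∑ i ∈ s, φ (x i) - #s * φ ν - (#s * m - #s * ν) * φ' ν := by
    intro ν
    simp only [bregmanDiv, sum_sub_distrib, ← sum_mul, sum_const, nsmul_eq_mul, hm]
  rw [hsum, hsum, bregmanDiv]
  ring

theorem stmt_1_general (C : Set ℝ)
    (Ω : Set ℝ) (hΩ : Ω = interior C)
    (φ φ' : ℝ → ℝ)
    (hconv : StrictConvexOn ℝ C φ)
    (hderiv : ∀ y ∈ Ω, HasDerivAt φ (φ' y) y)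
    (d : ℝ → ℝ → ℝ)
    (hd : ∀ x y, d x y = φ x - φ y - (x - y) * φ' y)
    (N : ℕ) (hN : 0 < N)
    (x : Fin N → ℝ)
    (xbar : ℝ) (hxbar : xbar = (∑ i, x i) / N) (hxbarΩ : xbar ∈ Ω) :
    (∀ μ ∈ Ω, ∑ i, d (x i) xbar ≤ ∑ i, d (x i) μ) ∧
    (∀ μ ∈ Ω, μ ≠ xbar → ∑ i, d (x i) xbar < ∑ i, d (x i) μ) := by
  obtain rfl : d = bregmanDiv φ φ' := funext₂ hd
  have hΩC : Ω ⊆ C := hΩ ▸ interior_subset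
  have hN' : (0 : ℝ) < N := Nat.cast_pos.mpr hN
  have hsum : ∑ i, x i = #(univ : Finset (Fin N)) * xbar := by
    rw [card_univ, Fintype.card_fin, hxbar, mul_div_cancel₀ _ hN'.ne']
  have hsplit : ∀ μ, ∑ i, bregmanDiv φ φ' (x i) μ
      = ∑ i, bregmanDiv φ φ' (x i) xbar + N * bregmanDiv φ φ' xbar μ := fun μ => by
    simpa using sum_bregmanDiv_eq_sum_bregmanDiv_mean_add φ φ' univ x hsum μ
  have hlt : ∀ μ ∈ Ω, μ ≠ xbar → ∑ i, bregmanDiv φ φ' (x i) xbar < ∑ i, bregmanDiv φ φ' (x i) μ :=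
    fun μ hμ hne => by
      rw [hsplit μ, lt_add_iff_pos_right]
      exact mul_pos hN' (bregmanDiv_pos hconv (hΩC hxbarΩ) (hΩC hμ) hne.symm (hderiv μ hμ))
  refine ⟨fun μ hμ => ?_, hlt⟩
  rcases eq_or_ne μ xbar with rfl | hne
  · exact le_rfl
  · exact (hlt μ hμ hne).le

/-- ML part of the paper's Theorem 6: for a Bregman divergence `d_φ` generated by a
strictly convex `φ` on an interval `C`, differentiable on the interior `Ω`, the total
divergence `μ ↦ Σᵢ d_φ(xᵢ, μ)` over `Ω` is uniquely minimized at the sample mean `x̄`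
whenever `x̄ ∈ Ω`. -/
theorem stmt_1 (C : Set ℝ) (hC : C.OrdConnected)
    (Ω : Set ℝ) (hΩ : Ω = interior C) (hΩne : Ω.Nonempty)
    (φ φ' : ℝ → ℝ)
    (hconv : StrictConvexOn ℝ C φ)
    (hderiv : ∀ y ∈ Ω, HasDerivAt φ (φ' y) y)
    (d : ℝ → ℝ → ℝ)
    (hd : ∀ x y, d x y = φ x - φ y - (x - y) * φ' y)
    (N : ℕ) (hN : 0 < N)
    (x : Fin N → ℝ) (hx : ∀ i, x i ∈ C)
    (xbar : ℝ) (hxbar : xbar = (∑ i, x i) / N) (hxbarΩ : xbar ∈ Ω) :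
    (∀ μ ∈ Ω, ∑ i, d (x i) xbar ≤ ∑ i, d (x i) μ) ∧
    (∀ μ ∈ Ω, μ ≠ xbar → ∑ i, d (x i) xbar < ∑ i, d (x i) μ) :=
  stmt_1_general C Ω hΩ φ φ' hconv hderiv d hd N hN x xbar hxbar hxbarΩ
end

section
/- Define f : ℝ² → ℝ on the set D = {(x₁,x₂) : x₁ > 0, x₂ ≥ 0} ∪ {(0,0)} by f(x₁,x₂) = x₂²/(2x₁) − 2·√x₂ for x₁ > 0 and f(0,0) = 0. Then: (i) f is convex on D; (ii) f is strictly convex on the open positive quadrant {(x₁,x₂) : x₁ > 0, x₂ > 0}; (iii) f is not strictly convex on D, since f(x₁, 0) = 0 for every x₁ > 0, so f is constant on a nontrivial segment of D. -/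
open Set

/-!
On `D`, `f = ½ · x₂²/x₁ − 2√x₂`, the origin included since `0²/0 = 0` in Lean. The
quadratic-over-linear function `x₂²/x₁` is positively homogeneous and subadditive on `D`, because
`y²/a + z²/b − (y + z)²/(a + b) = (b y − a z)² / (a b (a + b))`, hence convex; `√x₂` is concave.
On the open quadrant a segment either moves `x₂`, where `√` is strictly concave, or is horizontal,
where `x₂²/x₁` is strictly convex since `b y ≠ a z` there.
-/

section Cone

variable {𝕜 E : Type*} [Semiring 𝕜] [PartialOrder 𝕜]
  [AddCommMonoid E] [Module 𝕜 E] {s : Set E}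

theorem Convex.union_zero (hs : Convex 𝕜 s) (hsmul : ∀ x ∈ s, ∀ t : 𝕜, 0 < t → t • x ∈ s) :
    Convex 𝕜 (s ∪ {0}) := by
  refine convex_iff_forall_pos.2 ?_
  rintro x (hx | rfl) y (hy | rfl) a b ha hb hab
  · exact .inl (hs hx hy ha.le hb.le hab)
  · rw [smul_zero, add_zero]
    exact .inl (hsmul x hx a ha)
  · rw [smul_zero, zero_add]
    exact .inl (hsmul y hy b hb)
  · simp

theorem ConvexOn.of_add_le_of_smul_eq {f : E → 𝕜} (hs : Convex 𝕜 s)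
    (hsmul : ∀ x ∈ s, ∀ t : 𝕜, 0 < t → t • x ∈ s)
    (hadd : ∀ x ∈ s, ∀ y ∈ s, f (x + y) ≤ f x + f y)
    (hhom : ∀ x ∈ s, ∀ t : 𝕜, 0 < t → f (t • x) = t * f x) : ConvexOn 𝕜 s f := by
  refine convexOn_iff_forall_pos.2 ⟨hs, fun x hx y hy a b ha hb _ => ?_⟩
  calc f (a • x + b • y) ≤ f (a • x) + f (b • y) :=
        hadd _ (hsmul x hx a ha) _ (hsmul y hy b hb)
    _ = a • f x + b • f y := by rw [hhom x hx a ha, hhom y hy b hb, smul_eq_mul, smul_eq_mul]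

end Cone

theorem sq_div_add_sq_div_sub_add_sq_div_add {a b : ℝ} (ha : a ≠ 0) (hb : b ≠ 0)
    (hab : a + b ≠ 0) (y z : ℝ) :
    y ^ 2 / a + z ^ 2 / b - (y + z) ^ 2 / (a + b) = (b * y - a * z) ^ 2 / (a * b * (a + b)) := by
  field_simp
  ring

theorem add_sq_div_add_le {a b : ℝ} (ha : 0 < a) (hb : 0 < b) (y z : ℝ) :
    (y + z) ^ 2 / (a + b) ≤ y ^ 2 / a + z ^ 2 / b := by
  have := sq_div_add_sq_div_sub_add_sq_div_add ha.ne' hb.ne' (add_pos ha hb).ne' y z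
  have : 0 ≤ (b * y - a * z) ^ 2 / (a * b * (a + b)) := by positivity
  linarith

theorem add_sq_div_add_lt {a b y z : ℝ} (ha : 0 < a) (hb : 0 < b) (hyz : b * y ≠ a * z) :
    (y + z) ^ 2 / (a + b) < y ^ 2 / a + z ^ 2 / b := by
  have := sq_div_add_sq_div_sub_add_sq_div_add ha.ne' hb.ne' (add_pos ha hb).ne' y z
  have : 0 < (b * y - a * z) ^ 2 / (a * b * (a + b)) := by
    have := sub_ne_zero.2 hyz
    positivity
  linarith

noncomputable def quadOverLin (p : ℝ × ℝ) : ℝ := p.2 ^ 2 / p.1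

theorem quadOverLin_smul (t : ℝ) (p : ℝ × ℝ) : quadOverLin (t • p) = t * quadOverLin p := by
  rcases eq_or_ne t 0 with rfl | ht
  · simp [quadOverLin]
  · simp only [quadOverLin, Prod.smul_fst, Prod.smul_snd, smul_eq_mul, mul_pow]
    rw [sq, mul_assoc, mul_div_mul_left _ _ ht, mul_div_assoc]

theorem quadOverLin_add_le {p q : ℝ × ℝ} (hp : 0 < p.1 ∨ p = 0) (hq : 0 < q.1 ∨ q = 0) :
    quadOverLin (p + q) ≤ quadOverLin p + quadOverLin q := by
  rcases hp with hp | rfl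
  · rcases hq with hq | rfl
    · exact add_sq_div_add_le hp hq _ _
    · simp [quadOverLin]
  · simp [quadOverLin]

theorem quadOverLin_add_lt {p q : ℝ × ℝ} (hp : 0 < p.1) (hq : 0 < q.1)
    (hpq : q.1 * p.2 ≠ p.1 * q.2) : quadOverLin (p + q) < quadOverLin p + quadOverLin q :=
  add_sq_div_add_lt hp hq hpq

abbrev quadrantWithOrigin : Set (ℝ × ℝ) :=
  {p : ℝ × ℝ | 0 < p.1 ∧ 0 ≤ p.2} ∪ {((0 : ℝ), (0 : ℝ))}

theorem smul_mem_quadrantWithOrigin {p : ℝ × ℝ} (hp : p ∈ quadrantWithOrigin) {t : ℝ}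
    (ht : 0 < t) : t • p ∈ quadrantWithOrigin := by
  rcases hp with ⟨hp₁, hp₂⟩ | rfl
  · exact .inl ⟨mul_pos ht hp₁, mul_nonneg ht.le hp₂⟩
  · simp

theorem convex_quadrantWithOrigin : Convex ℝ quadrantWithOrigin :=
  ((convex_Ioi 0).prod (convex_Ici 0)).union_zero fun _ hp _ ht =>
    ⟨mul_pos ht hp.1, mul_nonneg ht.le hp.2⟩

theorem convexOn_quadOverLin_quadrantWithOrigin : ConvexOn ℝ quadrantWithOrigin quadOverLin :=
  .of_add_le_of_smul_eq convex_quadrantWithOrigin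
    (fun _ hp _ ht => smul_mem_quadrantWithOrigin hp ht)
    (fun _ hp _ hq => quadOverLin_add_le (hp.imp And.left id) (hq.imp And.left id))
    (fun p _ t _ => quadOverLin_smul t p)

theorem concaveOn_sqrt_snd_quadrantWithOrigin :
    ConcaveOn ℝ quadrantWithOrigin fun p : ℝ × ℝ => √p.2 := by
  refine (Real.strictConcaveOn_sqrt.concaveOn.comp_linearMap (LinearMap.snd ℝ ℝ ℝ)).subset ?_
    convex_quadrantWithOrigin
  rintro p (hp | rfl)
  exacts [hp.2, le_refl (0 : ℝ)]

theorem convexOn_quadOverLin_div_two_sub_sqrt :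
    ConvexOn ℝ quadrantWithOrigin fun p => quadOverLin p / 2 - 2 * √p.2 :=
  ((convexOn_quadOverLin_quadrantWithOrigin.smul (by norm_num : (0 : ℝ) ≤ 1 / 2)).sub
    (concaveOn_sqrt_snd_quadrantWithOrigin.smul zero_le_two)).congr fun p _ => by
      simp only [Pi.sub_apply, smul_eq_mul]
      ring

theorem strictConvexOn_quadOverLin_div_two_sub_sqrt :
    StrictConvexOn ℝ {p : ℝ × ℝ | 0 < p.1 ∧ 0 < p.2} fun p => quadOverLin p / 2 - 2 * √p.2 := by
  refine ⟨(convex_Ioi 0).prod (convex_Ioi 0), ?_⟩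
  rintro p ⟨hp₁, hp₂⟩ q ⟨hq₁, hq₂⟩ hpq a b ha hb hab
  have hQ := convexOn_quadOverLin_quadrantWithOrigin.2 (.inl ⟨hp₁, hp₂.le⟩) (.inl ⟨hq₁, hq₂.le⟩)
    ha.le hb.le hab
  have hS := concaveOn_sqrt_snd_quadrantWithOrigin.2 (.inl ⟨hp₁, hp₂.le⟩) (.inl ⟨hq₁, hq₂.le⟩)
    ha.le hb.le hab
  simp only [smul_eq_mul, Prod.snd_add, Prod.smul_snd] at hQ hS ⊢
  by_cases hy : p.2 = q.2
  · -- on a horizontal segment `√x₂` is affine, but `quadOverLin` is strictly convex there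
    have hx : p.1 ≠ q.1 := fun hx => hpq (Prod.ext hx hy)
    have hQ' : quadOverLin (a • p + b • q) < a * quadOverLin p + b * quadOverLin q := by
      rw [← quadOverLin_smul, ← quadOverLin_smul]
      refine quadOverLin_add_lt (mul_pos ha hp₁) (mul_pos hb hq₁) ?_
      simp only [Prod.smul_fst, Prod.smul_snd, smul_eq_mul, hy]
      intro h
      exact hx (by nlinarith [mul_pos (mul_pos ha hb) hq₂])
    linarith
  · have hS' := Real.strictConcaveOn_sqrt.2 hp₂.le hq₂.le hy ha hb hab
    simp only [smul_eq_mul] at hS'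
    linarith

/-- The paper's Example 1: `f(x₁,x₂) = x₂²/(2x₁) − 2√x₂` on
`D = {x₁ > 0, x₂ ≥ 0} ∪ {(0,0)}` (with `f(0,0) = 0`) is convex on `D`, strictly
convex on the open positive quadrant, but not strictly convex on `D`, since it
vanishes on the ray `{(x₁, 0) : x₁ > 0}`. -/
theorem stmt_3 (D : Set (ℝ × ℝ))
    (hD : D = {p : ℝ × ℝ | 0 < p.1 ∧ 0 ≤ p.2} ∪ {((0 : ℝ), (0 : ℝ))})
    (f : ℝ × ℝ → ℝ)
    (hf : ∀ p : ℝ × ℝ, 0 < p.1 → 0 ≤ p.2 →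
      f p = p.2 ^ 2 / (2 * p.1) - 2 * Real.sqrt p.2)
    (hf0 : f (0, 0) = 0) :
    ConvexOn ℝ D f ∧
    StrictConvexOn ℝ {p : ℝ × ℝ | 0 < p.1 ∧ 0 < p.2} f ∧
    ¬ StrictConvexOn ℝ D f ∧
    (∀ x₁ : ℝ, 0 < x₁ → f (x₁, 0) = 0) := by
  subst hD
  have hzero (x₁ : ℝ) (hx₁ : 0 < x₁) : f (x₁, 0) = 0 := by simp [hf (x₁, 0) hx₁ le_rfl]
  have hEq : EqOn (fun p => quadOverLin p / 2 - 2 * √p.2) f quadrantWithOrigin := by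
    rintro p (⟨hp₁, hp₂⟩ | rfl)
    · dsimp only
      rw [hf p hp₁ hp₂, quadOverLin, div_div, mul_comm p.1]
    · simp [quadOverLin, hf0]
  refine ⟨convexOn_quadOverLin_div_two_sub_sqrt.congr hEq,
    strictConvexOn_quadOverLin_div_two_sub_sqrt.congr (hEq.mono fun p hp => .inl ⟨hp.1, hp.2.le⟩),
    fun h => ?_, hzero⟩
  have hlt := h.lt_on_open_segment' (x := (1, 0)) (y := (2, 0)) (.inl ⟨one_pos, le_rfl⟩)
    (.inl ⟨two_pos, le_rfl⟩) (by simp) (a := 1 / 2) (b := 1 / 2) (by norm_num) (by norm_num)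
    (by norm_num)
  have hmid : (1 / 2 : ℝ) • ((1 : ℝ), (0 : ℝ)) + (1 / 2 : ℝ) • ((2 : ℝ), (0 : ℝ)) = (3 / 2, 0) := by
    norm_num
  rw [hmid, hzero 1 one_pos, hzero 2 two_pos, hzero (3 / 2) (by norm_num), max_self] at hlt
  exact hlt.false
end

section
/- Fix α > 0. For every t > 0, sup_{θ < −log α} (t·θ + (1/α)·log(1 − α·e^θ)) = t·log t − ((α·t + 1)/α)·log(α·t + 1). -/
/-!
Writing `x = e^θ`, the objective becomes the concave function `t log x + (1/α) log (1 - α x)` on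
`0 < x < 1/α`, whose critical point is `x* = t / (α t + 1)`. Tangent-line bounds for `log` at `x*`
and at `1 - α x*`, weighted by `t` and `1/α`, have linear parts cancelling exactly, so the objective
is maximised at `x*`, where it equals `t log t - ((α t + 1)/α) log (α t + 1)`.
-/

open Set Real

lemma Real.log_le_log_add_div_sub_one {a b : ℝ} (ha : 0 < a) (hb : 0 < b) :
    log a ≤ log b + (a / b - 1) := by
  have := log_le_sub_one_of_pos (div_pos ha hb)
  rw [log_div ha.ne' hb.ne'] at this
  linarith

lemma Real.mul_exp_lt_one_iff {α : ℝ} (hα : 0 < α) (θ : ℝ) :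
    α * exp θ < 1 ↔ θ < -log α := by
  rw [← log_inv, lt_log_iff_exp_lt (inv_pos.mpr hα), ← one_div, lt_div_iff₀' hα]

section NegBinomialConjugate

variable {α t : ℝ}

lemma one_sub_mul_div_mul_add_one (hα : 0 < α) (ht : 0 < t) :
    1 - α * (t / (α * t + 1)) = (α * t + 1)⁻¹ := by
  field_simp
  ring

lemma mul_log_add_div_log_one_sub_le (hα : 0 < α) (ht : 0 < t) {x : ℝ} (hx : 0 < x)
    (hαx : α * x < 1) :
    t * log x + (1 / α) * log (1 - α * x)
      ≤ t * log (t / (α * t + 1)) + (1 / α) * log (1 - α * (t / (α * t + 1))) := by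
  have hαt : 0 < α * t + 1 := by positivity
  have hlog_x := log_le_log_add_div_sub_one hx (div_pos ht hαt)
  have hlog_one_sub := log_le_log_add_div_sub_one (b := 1 - α * (t / (α * t + 1)))
    (sub_pos.mpr hαx) (by rw [one_sub_mul_div_mul_add_one hα ht]; positivity)
  have hlinear : t * (x / (t / (α * t + 1)) - 1)
      + (1 / α) * ((1 - α * x) / (1 - α * (t / (α * t + 1))) - 1) = 0 := by
    rw [one_sub_mul_div_mul_add_one hα ht]
    field_simp
    ring
  linarith [mul_le_mul_of_nonneg_left hlog_x ht.le,
    mul_le_mul_of_nonneg_left hlog_one_sub (one_div_pos.mpr hα).le]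

lemma mul_log_add_div_log_one_sub_eq (hα : 0 < α) (ht : 0 < t) :
    t * log (t / (α * t + 1)) + (1 / α) * log (1 - α * (t / (α * t + 1)))
      = t * log t - ((α * t + 1) / α) * log (α * t + 1) := by
  have hαt : 0 < α * t + 1 := by positivity
  rw [one_sub_mul_div_mul_add_one hα ht, log_inv, log_div ht.ne' hαt.ne']
  field_simp
  ring

end NegBinomialConjugate

/-- The convex conjugate of the non-negative discrete EDM log-partition function
`Ψ(θ) = −(1/α) log(1 − α e^θ)` on `Θ = (−∞, −log α)` at `t > 0` is
`φ(t) = t log t − ((αt+1)/α) log(αt+1)`. -/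
theorem stmt_9 (α : ℝ) (hα : 0 < α) (t : ℝ) (ht : 0 < t) :
    sSup ((fun θ : ℝ => t * θ + (1 / α) * Real.log (1 - α * Real.exp θ)) ''
        Set.Iio (-Real.log α))
      = t * Real.log t - ((α * t + 1) / α) * Real.log (α * t + 1) := by
  have hx : 0 < t / (α * t + 1) := by positivity
  refine IsGreatest.csSup_eq ⟨⟨log (t / (α * t + 1)), ?_, ?_⟩, ?_⟩
  · rw [mem_Iio, ← mul_exp_lt_one_iff hα, exp_log hx, ← sub_pos,
      one_sub_mul_div_mul_add_one hα ht]
    positivity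
  · dsimp only
    rw [exp_log hx, ← mul_log_add_div_log_one_sub_eq hα ht]
  · rintro _ ⟨θ, hθ, rfl⟩
    rw [← mul_log_add_div_log_one_sub_eq hα ht]
    simpa only [log_exp] using mul_log_add_div_log_one_sub_le hα ht (exp_pos θ)
      ((mul_exp_lt_one_iff hα θ).mpr hθ)
end

section
/- Fix α > 0. For every t ∈ ℝ, sup over θ ∈ (−π/(2√α), π/(2√α)) of (t·θ + (1/α)·log(cos(√α·θ))) equals (t/√α)·arctan(√α·t) − (1/(2α))·log(1 + α·t²), and the supremum is attained at θ = arctan(√α·t)/√α. -/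
/-!
Substituting `x = √α θ` turns `α f` into `x ↦ u x + log (cos x)` on `(-π/2, π/2)`, with `u = √α t`.
Its derivative `u - tan x` is decreasing and vanishes at `x = arctan u`, so that point is the
maximum, and `cos (arctan u) = 1 / √(1 + u²)` gives the value.
-/

open Set Real

lemma hasDerivAt_log_cos {x : ℝ} (hx : cos x ≠ 0) :
    HasDerivAt (fun y => log (cos y)) (-tan x) x := by
  convert (hasDerivAt_cos x).log hx using 1
  rw [tan_eq_sin_div_cos, neg_div]

lemma isMaxOn_mul_add_log_cos (u : ℝ) :
    IsMaxOn (fun x => u * x + log (cos x)) (Ioo (-(π / 2)) (π / 2)) (arctan u) := by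
  have hderiv : ∀ x ∈ Ioo (-(π / 2)) (π / 2),
      HasDerivAt (fun x => u * x + log (cos x)) (u - tan x) x := fun x hx =>
    (((hasDerivAt_id' x).const_mul u).add
      (hasDerivAt_log_cos (cos_pos_of_mem_Ioo hx).ne')).congr_deriv (by ring)
  have hdiff : DifferentiableOn ℝ (fun x => u * x + log (cos x)) (Ioo (-(π / 2)) (π / 2)) :=
    fun x hx => (hderiv x hx).differentiableAt.differentiableWithinAt
  have harctan : arctan u ∈ Ioo (-(π / 2)) (π / 2) :=
    ⟨neg_pi_div_two_lt_arctan u, arctan_lt_pi_div_two u⟩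
  refine isMaxOn_Ioo_of_deriv (hderiv _ harctan).continuousAt
    (hdiff.mono (Ioo_subset_Ioo_right harctan.2.le))
    (hdiff.mono (Ioo_subset_Ioo_left harctan.1.le)) (fun x hx => ?_) (fun x hx => ?_)
  · have hx' : x ∈ Ioo (-(π / 2)) (π / 2) := ⟨hx.1, hx.2.trans harctan.2⟩
    rw [(hderiv x hx').deriv, sub_nonneg, ← tan_arctan u]
    exact (strictMonoOn_tan hx' harctan hx.2).le
  · have hx' : x ∈ Ioo (-(π / 2)) (π / 2) := ⟨harctan.1.trans hx.1, hx.2⟩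
    rw [(hderiv x hx').deriv, sub_nonpos, ← tan_arctan u]
    exact (strictMonoOn_tan harctan hx' hx.1).le

lemma mul_arctan_add_log_cos_arctan (u : ℝ) :
    u * arctan u + log (cos (arctan u)) = u * arctan u - log (1 + u ^ 2) / 2 := by
  rw [cos_arctan, one_div, log_inv, log_sqrt (by positivity)]
  ring

lemma mem_Ioo_pi_div_two_mul_iff {s θ : ℝ} (hs : 0 < s) :
    θ ∈ Ioo (-(π / (2 * s))) (π / (2 * s)) ↔ s * θ ∈ Ioo (-(π / 2)) (π / 2) := by
  simp only [mem_Ioo, ← div_div, ← neg_div, div_lt_iff₀' hs, lt_div_iff₀' hs]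

/-- The convex conjugate of the real-continuous EDM log-partition function
`Ψ(θ) = −(1/α) log(cos(√α θ))`: for every `t`, the supremum over
`Θ = (−π/(2√α), π/(2√α))` of `tθ + (1/α) log(cos(√α θ))` equals
`(t/√α) arctan(√α t) − (1/(2α)) log(1 + αt²)`, attained at
`θ = arctan(√α t)/√α`. -/
theorem stmt_13 (α : ℝ) (hα : 0 < α) (t : ℝ)
    (f : ℝ → ℝ)
    (hf : ∀ θ, f θ = t * θ + (1 / α) * Real.log (Real.cos (Real.sqrt α * θ)))
    (Θ : Set ℝ)
    (hΘ : Θ = Set.Ioo (-(Real.pi / (2 * Real.sqrt α))) (Real.pi / (2 * Real.sqrt α))) :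
    IsGreatest (f '' Θ)
      ((t / Real.sqrt α) * Real.arctan (Real.sqrt α * t)
        - (1 / (2 * α)) * Real.log (1 + α * t ^ 2)) ∧
    f (Real.arctan (Real.sqrt α * t) / Real.sqrt α)
      = (t / Real.sqrt α) * Real.arctan (Real.sqrt α * t)
        - (1 / (2 * α)) * Real.log (1 + α * t ^ 2) := by
  subst hΘ
  set s := √α
  have hs : 0 < s := sqrt_pos.mpr hα
  have hsα : s ^ 2 = α := sq_sqrt hα.le
  have hf' : ∀ θ, f θ = (1 / α) * (s * t * (s * θ) + log (cos (s * θ))) := fun θ => by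
    rw [hf, ← hsα]
    field_simp
  have hsθ : s * (arctan (s * t) / s) = arctan (s * t) := mul_div_cancel₀ _ hs.ne'
  have hval : f (arctan (s * t) / s)
      = t / s * arctan (s * t) - 1 / (2 * α) * log (1 + α * t ^ 2) := by
    rw [hf', hsθ, mul_arctan_add_log_cos_arctan, ← hsα]
    field_simp
  have hmem : arctan (s * t) / s ∈ Ioo (-(π / (2 * s))) (π / (2 * s)) := by
    rw [mem_Ioo_pi_div_two_mul_iff hs, hsθ]
    exact ⟨neg_pi_div_two_lt_arctan _, arctan_lt_pi_div_two _⟩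
  refine ⟨⟨⟨_, hmem, hval⟩, ?_⟩, hval⟩
  rintro _ ⟨θ, hθ, rfl⟩
  rw [← hval, hf', hf', hsθ]
  exact mul_le_mul_of_nonneg_left
    (isMaxOn_mul_add_log_cos (s * t) ((mem_Ioo_pi_div_two_mul_iff hs).1 hθ)) (by positivity)
end

section
/- Fix x, y > 0 and let d(x, y | α) = (x^α + (α−1)·y^α − α·x·y^{α−1})/(α·(α−1)) for α ∉ {0,1}. Then: (i) d(x, y | α) → x·(log x − log y) + (y − x) as α → 1 (α ≠ 0, 1); and (ii) d(x, y | α) → x/y − log(x/y) − 1 as α → 0 (α ≠ 0, 1). -/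
/-!
Both limits are `0/0` forms: the numerator `N(α) = x^α + (α−1)y^α − αxy^{α−1}` vanishes at
`α = 1` and at `α = 0`, so near each of these points `N(α)/(α(α−1))` is a difference quotient
of `N` times a factor continuous there, and the limit is `N'(1)` resp. `−N'(0)`.
-/

open Set Filter Topology

theorem HasDerivAt.tendsto_div_sub_mul {𝕜 : Type*} [NontriviallyNormedField 𝕜] {f g : 𝕜 → 𝕜}
    {a f' : 𝕜} (hf : HasDerivAt f f' a) (hfa : f a = 0) (hg : ContinuousAt g a) (hga : g a ≠ 0) :
    Tendsto (fun t => f t / ((t - a) * g t)) (𝓝[≠] a) (𝓝 (f' / g a)) := by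
  refine ((hasDerivAt_iff_tendsto_slope.mp hf).div
    (hg.tendsto.mono_left nhdsWithin_le_nhds) hga).congr fun t => ?_
  rw [Pi.div_apply, slope_def_field, hfa, sub_zero, div_div]

theorem hasDerivAt_tweedie_numerator {x y : ℝ} (hx : 0 < x) (hy : 0 < y) (c : ℝ) :
    HasDerivAt (fun α : ℝ => x ^ α + (α - 1) * y ^ α - α * x * y ^ (α - 1))
      (Real.log x * x ^ c + (y ^ c + (c - 1) * (Real.log y * y ^ c)) -
        (x * y ^ (c - 1) + c * x * (Real.log y * y ^ (c - 1)))) c := by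
  have hid := hasDerivAt_id' c
  exact (((hid.const_rpow hx).add ((hid.sub_const 1).mul (hid.const_rpow hy))).sub
    ((hid.mul_const x).mul ((hid.sub_const 1).const_rpow hy))).congr_deriv (by ring)

/-- Continuity of the Tweedie divergence in `α`: as `α → 1` (through values
`∉ {0,1}`) the divergence tends to the generalized KL divergence
`x(log x − log y) + (y − x)`, and as `α → 0` it tends to the Itakura–Saito
divergence `x/y − log(x/y) − 1`. -/
theorem stmt_17 (x y : ℝ) (hx : 0 < x) (hy : 0 < y) :
    Tendsto (fun α : ℝ =>
        (x ^ α + (α - 1) * y ^ α - α * x * y ^ (α - 1)) / (α * (α - 1)))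
      (𝓝[{α : ℝ | α ≠ 0 ∧ α ≠ 1}] 1)
      (𝓝 (x * (Real.log x - Real.log y) + (y - x))) ∧
    Tendsto (fun α : ℝ =>
        (x ^ α + (α - 1) * y ^ α - α * x * y ^ (α - 1)) / (α * (α - 1)))
      (𝓝[{α : ℝ | α ≠ 0 ∧ α ≠ 1}] 0)
      (𝓝 (x / y - Real.log (x / y) - 1)) := by
  have hS0 : {α : ℝ | α ≠ 0 ∧ α ≠ 1} ⊆ {0}ᶜ := fun _ h => h.1
  have hS1 : {α : ℝ | α ≠ 0 ∧ α ≠ 1} ⊆ {1}ᶜ := fun _ h => h.2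
  constructor
  · have h := (hasDerivAt_tweedie_numerator hx hy 1).tendsto_div_sub_mul (by simp)
      (continuousAt_id' 1) one_ne_zero
    convert h.mono_left (nhdsWithin_mono _ hS1) using 2
    · ring
    · simp only [Real.rpow_one, sub_self, zero_mul, add_zero, Real.rpow_zero, mul_one, one_mul,
        div_one]
      ring
  · have h := (hasDerivAt_tweedie_numerator hx hy 0).tendsto_div_sub_mul (g := (· - 1))
      (by simp [Real.rpow_neg_one]) ((continuousAt_id' 0).sub continuousAt_const) (by norm_num)
    convert h.mono_left (nhdsWithin_mono _ hS0) using 2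
    · simp
    · rw [Real.log_div hx.ne' hy.ne']
      simp only [Real.rpow_zero, mul_one, zero_sub, neg_mul, one_mul, Real.rpow_neg_one, zero_mul,
        add_zero]
      ring
end
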